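/- arXiv:2003.06875 — 3 statements merged into one kernel-verified Lean document; each statement's English description precedes it below -/
import Mathlib

section
/- The modified greedy algorithm for 0/1 knapsack achieves a 1/2-approximation: sort items in non-increasing order of value-to-weight ratio v i / w i, let g be the first index at which the prefix no longer fits in capacity W (i.e., ∑_{i<g} w i ≤ W but ∑_{i≤g} w i > W), and output the better of the prefix {0,...,g-1} and the single item {g} (assuming w g ≤ W). Then max(∑_{i<g} v i, v g) ≥ (1/2) · OPT, where OPT is the maximum of ∑_{i∈S} v i over all S ⊆ Fin n with ∑_{i∈S} w i ≤ W. -/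
open Finset

/-- Modified greedy for 0/1 knapsack is a 1/2-approximation. -/
theorem greedy_knapsack_half_approx (n : ℕ) (v w : Fin n → ℝ) (W : ℝ)
    (hv : ∀ i, 0 < v i) (hw : ∀ i, 0 < w i) (hW : 0 < W)
    (hfit : ∀ i, w i ≤ W)
    (hsorted : ∀ i j : Fin n, i ≤ j → v j / w j ≤ v i / w i)
    (g : Fin n)
    (hg1 : ∑ i ∈ Finset.univ.filter (fun i : Fin n => i < g), w i ≤ W)
    (hg2 : W < ∑ i ∈ Finset.univ.filter (fun i : Fin n => i ≤ g), w i) :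
    ∀ S : Finset (Fin n), ∑ i ∈ S, w i ≤ W →
      (1 / 2) * ∑ i ∈ S, v i ≤
        max (∑ i ∈ Finset.univ.filter (fun i : Fin n => i < g), v i) (v g) := by
  intro S hS
  set P := Finset.univ.filter (fun i : Fin n => i < g) with hP
  set Pg := Finset.univ.filter (fun i : Fin n => i ≤ g) with hPgdef
  have hgP : g ∉ P := by simp [hP]
  have hPg_eq : Pg = insert g P := by
    ext i
    simp only [hP, hPgdef, Finset.mem_filter, Finset.mem_univ, true_and,
      Finset.mem_insert, le_iff_lt_or_eq]
    tauto
  have hsum_v : ∑ i ∈ Pg, v i = v g + ∑ i ∈ P, v i := by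
    rw [hPg_eq, Finset.sum_insert hgP]
  set r := v g / w g with hr
  have hr0 : 0 ≤ r := le_of_lt (div_pos (hv g) (hw g))
  have h1 : ∀ i ∈ S \ Pg, v i ≤ r * w i := by
    intro i hi
    simp only [hPgdef, Finset.mem_sdiff, Finset.mem_filter, Finset.mem_univ, true_and] at hi
    have hgi : g ≤ i := le_of_lt (lt_of_not_ge hi.2)
    exact (div_le_iff₀ (hw i)).mp (hsorted g i hgi)
  have h2 : ∀ i ∈ Pg \ S, r * w i ≤ v i := by
    intro i hi
    simp only [hPgdef, Finset.mem_sdiff, Finset.mem_filter, Finset.mem_univ, true_and] at hi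
    exact (le_div_iff₀ (hw i)).mp (hsorted i g hi.1)
  have hwS : ∑ i ∈ S ∩ Pg, w i + ∑ i ∈ S \ Pg, w i = ∑ i ∈ S, w i :=
    Finset.sum_inter_add_sum_sdiff S Pg w
  have hwPg : ∑ i ∈ Pg ∩ S, w i + ∑ i ∈ Pg \ S, w i = ∑ i ∈ Pg, w i :=
    Finset.sum_inter_add_sum_sdiff Pg S w
  have hvS : ∑ i ∈ S ∩ Pg, v i + ∑ i ∈ S \ Pg, v i = ∑ i ∈ S, v i :=
    Finset.sum_inter_add_sum_sdiff S Pg v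
  have hvPg : ∑ i ∈ Pg ∩ S, v i + ∑ i ∈ Pg \ S, v i = ∑ i ∈ Pg, v i :=
    Finset.sum_inter_add_sum_sdiff Pg S v
  have hinterw : ∑ i ∈ S ∩ Pg, w i = ∑ i ∈ Pg ∩ S, w i := by rw [Finset.inter_comm]
  have hinterv : ∑ i ∈ S ∩ Pg, v i = ∑ i ∈ Pg ∩ S, v i := by rw [Finset.inter_comm]
  have hwdiff : ∑ i ∈ S \ Pg, w i ≤ ∑ i ∈ Pg \ S, w i := by
    have : ∑ i ∈ S, w i ≤ W := hS
    have : W < ∑ i ∈ Pg, w i := hg2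
    linarith [hS, hg2, hwS, hwPg, hinterw]
  have key : ∑ i ∈ S, v i ≤ ∑ i ∈ Pg, v i := by
    have e1 : ∑ i ∈ S \ Pg, v i ≤ r * ∑ i ∈ S \ Pg, w i := by
      rw [Finset.mul_sum]; exact Finset.sum_le_sum h1
    have e2 : r * ∑ i ∈ Pg \ S, w i ≤ ∑ i ∈ Pg \ S, v i := by
      rw [Finset.mul_sum]; exact Finset.sum_le_sum h2
    have e3 : r * ∑ i ∈ S \ Pg, w i ≤ r * ∑ i ∈ Pg \ S, w i :=
      mul_le_mul_of_nonneg_left hwdiff hr0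
    linarith
  have hmax1 : ∑ i ∈ P, v i ≤ max (∑ i ∈ P, v i) (v g) := le_max_left _ _
  have hmax2 : v g ≤ max (∑ i ∈ P, v i) (v g) := le_max_right _ _
  linarith [key, hsum_v]
end

section
/- For the alternative-parameter problem, an optimal solution exists whose coordinates are realized by strategy coordinates or the original request: given a finite set S of points in ℝ³ with |S| ≥ k and a request d ∈ ℝ³, there exists d' minimizing the squared Euclidean distance ‖d' − d‖² subject to d' covering at least k points of S, such that each coordinate d'_j ∈ {d_j} ∪ {s_j : s ∈ S}. In particular the continuous optimization problem attains its minimum on a finite candidate set. -/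
open scoped Classical

/-- An optimal alternative deployment parameter exists whose every coordinate is either
the corresponding coordinate of the request `d` or of some strategy in `S`. -/
theorem adpar_optimum_on_candidate_grid (S : Finset (Fin 3 → ℝ)) (k : ℕ)
    (hk : k ≤ S.card) (d : Fin 3 → ℝ) :
    ∃ d' : Fin 3 → ℝ,
      k ≤ (S.filter (fun s => s ≤ d')).card ∧
      (∀ x : Fin 3 → ℝ, k ≤ (S.filter (fun s => s ≤ x)).card →
        ∑ j : Fin 3, (d' j - d j) ^ 2 ≤ ∑ j : Fin 3, (x j - d j) ^ 2) ∧
      (∀ j : Fin 3, d' j = d j ∨ ∃ s ∈ S, d' j = s j) := by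
  rcases Nat.eq_zero_or_pos k with hk0 | hkpos
  · refine ⟨d, by simp [hk0], ?_, fun j => Or.inl rfl⟩
    intro x hx
    have h0 : ∑ j : Fin 3, (d j - d j) ^ 2 = 0 := by simp
    rw [h0]
    positivity
  have hS : S.Nonempty := Finset.card_pos.mp (lt_of_lt_of_le hkpos hk)
  set C : Fin 3 → Finset ℝ := fun j => insert (d j) (S.image (fun s => s j)) with hC
  have round : ∀ x : Fin 3 → ℝ, k ≤ (S.filter (fun s => s ≤ x)).card →
      ∃ y ∈ Fintype.piFinset C, k ≤ (S.filter (fun s => s ≤ y)).card ∧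
        ∑ j : Fin 3, (y j - d j) ^ 2 ≤ ∑ j : Fin 3, (x j - d j) ^ 2 := by
    intro x hx
    set T := S.filter (fun s => s ≤ x) with hT
    have hTne : T.Nonempty := Finset.card_pos.mp (lt_of_lt_of_le hkpos hx)
    set y : Fin 3 → ℝ := fun j => max (d j) (T.sup' hTne (fun s => s j)) with hy
    have hmem : y ∈ Fintype.piFinset C := by
      rw [Fintype.mem_piFinset]
      intro j
      rcases le_or_gt (T.sup' hTne (fun s => s j)) (d j) with h | h
      · simp [hy, max_eq_left h, hC]
      · obtain ⟨s, hs, hseq⟩ := Finset.exists_mem_eq_sup' hTne (fun s => s j)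
        have hsS : s ∈ S := (Finset.mem_filter.mp hs).1
        simp only [hC, Finset.mem_insert, Finset.mem_image]
        right
        exact ⟨s, hsS, by simp [hy, max_eq_right h.le, hseq]⟩
    refine ⟨y, hmem, ?_, ?_⟩
    · refine le_trans hx (Finset.card_le_card ?_)
      intro s hs
      have hsS := (Finset.mem_filter.mp hs).1
      refine Finset.mem_filter.mpr ⟨hsS, fun j => ?_⟩
      exact le_max_of_le_right (Finset.le_sup' (fun s => s j) hs)
    · apply Finset.sum_le_sum
      intro j _
      have h1 : d j ≤ y j := le_max_left _ _
      have h2 : y j ≤ max (d j) (x j) := by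
        apply max_le (le_max_left _ _)
        refine le_trans (Finset.sup'_le hTne _ fun s hs => ?_) (le_max_right _ _)
        exact (Finset.mem_filter.mp hs).2 j
      rcases le_or_gt (x j) (d j) with h | h
      · have hyd : y j = d j := le_antisymm (by simpa [max_eq_left h] using h2) h1
        rw [hyd]
        simp
        exact sq_nonneg _
      · have h3 : y j ≤ x j := by simpa [max_eq_right h.le] using h2
        exact sq_le_sq' (by linarith) (by linarith)
  set P := (Fintype.piFinset C).filter
    (fun y => k ≤ (S.filter (fun s => s ≤ y)).card) with hP
  have hPne : P.Nonempty := by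
    have hfeas : k ≤ (S.filter (fun s => s ≤ fun j => max (d j) (S.sup' hS (fun s => s j)))).card := by
      refine le_trans hk (Finset.card_le_card ?_)
      intro s hs
      exact Finset.mem_filter.mpr ⟨hs, fun j => le_max_of_le_right (Finset.le_sup' (fun s => s j) hs)⟩
    obtain ⟨y, hy1, hy2, _⟩ := round _ hfeas
    exact ⟨y, Finset.mem_filter.mpr ⟨hy1, hy2⟩⟩
  obtain ⟨d', hd'P, hd'min⟩ :=
    Finset.exists_min_image P (fun y => ∑ j : Fin 3, (y j - d j) ^ 2) hPne
  obtain ⟨hd'grid, hd'feas⟩ := Finset.mem_filter.mp hd'P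
  refine ⟨d', hd'feas, ?_, ?_⟩
  · intro x hx
    obtain ⟨y, hy1, hy2, hy3⟩ := round x hx
    exact le_trans (hd'min y (Finset.mem_filter.mpr ⟨hy1, hy2⟩)) hy3
  · intro j
    have hj := Fintype.mem_piFinset.mp hd'grid j
    simp only [hC, Finset.mem_insert, Finset.mem_image] at hj
    rcases hj with h | ⟨s, hs, hseq⟩
    · exact Or.inl h
    · exact Or.inr ⟨s, hs, hseq.symm⟩
end

section
/- The global optimum of the alternative-parameter problem equals the minimum over k-subsets: for a finite set S of points in ℝ³ with |S| ≥ k and request d ∈ ℝ³, min{‖x − d‖² : x covers at least k points of S} = min over subsets T ⊆ S with |T| = k of ∑_{j=1}^{3} (max(0, max_{s∈T} s_j − d_j))². -/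
open Finset
open scoped Classical

/-- The optimum of the alternative-parameter problem equals the minimum over `k`-subsets
of the closed-form value attained by the coordinatewise maximum. -/
theorem adpar_optimum_eq_min_over_subsets (S : Finset (Fin 3 → ℝ)) (k : ℕ)
    (hk1 : 1 ≤ k) (hk : k ≤ S.card) (d : Fin 3 → ℝ) :
    sInf {r : ℝ | ∃ x : Fin 3 → ℝ, k ≤ (S.filter (fun s => s ≤ x)).card ∧
        r = ∑ j : Fin 3, (x j - d j) ^ 2} =
      sInf {r : ℝ | ∃ T : Finset (Fin 3 → ℝ), T ⊆ S ∧ T.card = k ∧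
        ∃ hT : T.Nonempty,
          r = ∑ j : Fin 3, (max 0 (T.sup' hT (fun t => t j) - d j)) ^ 2} := by
  set A := {r : ℝ | ∃ x : Fin 3 → ℝ, k ≤ (S.filter (fun s => s ≤ x)).card ∧
      r = ∑ j : Fin 3, (x j - d j) ^ 2}
  set B := {r : ℝ | ∃ T : Finset (Fin 3 → ℝ), T ⊆ S ∧ T.card = k ∧
      ∃ hT : T.Nonempty, r = ∑ j : Fin 3, (max 0 (T.sup' hT (fun t => t j) - d j)) ^ 2}
  have hA0 : ∀ r ∈ A, (0 : ℝ) ≤ r := by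
    rintro r ⟨x, _, rfl⟩
    exact Finset.sum_nonneg fun j _ => sq_nonneg _
  have hB0 : ∀ r ∈ B, (0 : ℝ) ≤ r := by
    rintro r ⟨T, _, _, hT, rfl⟩
    exact Finset.sum_nonneg fun j _ => sq_nonneg _
  have hAbdd : BddBelow A := ⟨0, hA0⟩
  have hBbdd : BddBelow B := ⟨0, hB0⟩
  -- B ⊆ A
  have hBA : B ⊆ A := by
    rintro r ⟨T, hTS, hTk, hT, rfl⟩
    refine ⟨fun j => max (d j) (T.sup' hT (fun t => t j)), ?_, ?_⟩
    · have hsub : T ⊆ S.filter (fun s => s ≤ fun j => max (d j) (T.sup' hT fun t => t j)) := by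
        intro t ht
        refine Finset.mem_filter.2 ⟨hTS ht, fun j => ?_⟩
        exact le_trans (Finset.le_sup' (fun t => t j) ht) (le_max_right _ _)
      calc k = T.card := hTk.symm
        _ ≤ _ := Finset.card_le_card hsub
    · refine Finset.sum_congr rfl fun j _ => ?_
      have : max (d j) (T.sup' hT fun t => t j) - d j
          = max 0 (T.sup' hT (fun t => t j) - d j) := by
        rcases le_total (d j) (T.sup' hT fun t => t j) with h | h
        · rw [max_eq_right h, max_eq_right (by linarith : (0:ℝ) ≤ _)]
        · rw [max_eq_left h, max_eq_left (by linarith : _ ≤ (0:ℝ)), sub_self]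
      rw [this]
  -- B nonempty
  have hBne : B.Nonempty := by
    obtain ⟨T, hTS, hTk⟩ := Finset.exists_subset_card_eq hk
    have hT : T.Nonempty := Finset.card_pos.1 (hTk ▸ hk1)
    exact ⟨_, T, hTS, hTk, hT, rfl⟩
  have hAne : A.Nonempty := hBne.mono hBA
  refine le_antisymm (csInf_le_csInf hAbdd hBne hBA) ?_
  refine le_csInf hAne ?_
  rintro r ⟨x, hxk, rfl⟩
  obtain ⟨T, hTF, hTk⟩ := Finset.exists_subset_card_eq hxk
  have hTS : T ⊆ S := hTF.trans (Finset.filter_subset _ _)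
  have hT : T.Nonempty := Finset.card_pos.1 (hTk ▸ hk1)
  have hmem : (∑ j : Fin 3, (max 0 (T.sup' hT (fun t => t j) - d j)) ^ 2) ∈ B :=
    ⟨T, hTS, hTk, hT, rfl⟩
  refine le_trans (csInf_le hBbdd hmem) ?_
  refine Finset.sum_le_sum fun j _ => ?_
  have hle : T.sup' hT (fun t => t j) - d j ≤ x j - d j := by
    have : T.sup' hT (fun t => t j) ≤ x j := by
      refine Finset.sup'_le _ _ fun t ht => ?_
      exact (Finset.mem_filter.1 (hTF ht)).2 j
    linarith
  have h1 : max 0 (T.sup' hT (fun t => t j) - d j) ≤ |x j - d j| :=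
    max_le (abs_nonneg _) (hle.trans (le_abs_self _))
  calc (max 0 (T.sup' hT (fun t => t j) - d j)) ^ 2
      ≤ |x j - d j| ^ 2 := by
        apply pow_le_pow_left₀ (le_max_left _ _) h1
    _ = (x j - d j) ^ 2 := sq_abs _
end
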